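/- The symmetrised genus-0 topological recursion relation holds for the explicit genus-0 correlators of the one-dimensional topological field theory: for any n ≥ 3, any nonnegative integers d_1,…,d_n, and any two distinct indices i, j ∈ {1,…,n}, one has c(d_1,…,d_i+1,…,d_n) + c(d_1,…,d_j+1,…,d_n) = Σ_{I ⊔ J = {1,…,n}, i ∈ I, j ∈ J} c((d_a)_{a∈I}, 0) · c(0, (d_b)_{b∈J}). -/

import Mathlib

open Finset

variable {α : Type*} [DecidableEq α]

/-- The weighted subset sum `W(S,e,r)`. -/
def Wsum (e : α → ℕ) (S : Finset α) (r : ℕ) : ℕ :=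
  ∑ A ∈ S.powerset,
    if A.card = r + ∑ x ∈ A, e x then (A.card - 1).factorial * (S.card - A.card).factorial
    else 0

/-- Swap a double sum over (subset, element of subset). -/
lemma sum_powerset_mem_swap {β : Type*} [AddCommMonoid β] (S : Finset α)
    (F : α → Finset α → β) :
    ∑ A ∈ S.powerset, ∑ a ∈ A, F a A
      = ∑ a ∈ S, ∑ A ∈ (S.erase a).powerset, F a (insert a A) := by
  rw [Finset.sum_sigma', Finset.sum_sigma']
  refine Finset.sum_bij' (fun p _ => (⟨p.2, p.1.erase p.2⟩ : Σ _ : α, Finset α))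
    (fun p _ => (⟨insert p.1 p.2, p.1⟩ : Σ _ : Finset α, α)) ?_ ?_ ?_ ?_ ?_
  · rintro ⟨A, a⟩ hp
    simp only [Finset.mem_sigma, Finset.mem_powerset] at hp ⊢
    obtain ⟨hA, ha⟩ := hp
    exact ⟨hA ha, fun x hx => Finset.mem_erase.2 ⟨Finset.ne_of_mem_erase hx, hA (Finset.mem_of_mem_erase hx)⟩⟩
  · rintro ⟨a, A⟩ hp
    simp only [Finset.mem_sigma, Finset.mem_powerset] at hp ⊢
    obtain ⟨ha, hA⟩ := hp
    exact ⟨Finset.insert_subset ha (hA.trans (Finset.erase_subset _ _)), Finset.mem_insert_self _ _⟩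
  · rintro ⟨A, a⟩ hp
    simp only [Finset.mem_sigma, Finset.mem_powerset] at hp
    simp [Finset.insert_erase hp.2]
  · rintro ⟨a, A⟩ hp
    simp only [Finset.mem_sigma, Finset.mem_powerset] at hp
    have : a ∉ A := fun h => (Finset.mem_erase.1 (hp.2 h)).1 rfl
    simp [Finset.erase_insert this]
  · rintro ⟨A, a⟩ hp
    simp only [Finset.mem_sigma, Finset.mem_powerset] at hp
    simp [Finset.insert_erase hp.2]


lemma Wrec (e : α → ℕ) (S : Finset α) (r : ℕ) (hr : 1 ≤ r) :
    r * Wsum e S r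
      = (∑ a ∈ S, (r - 1 + e a) * Wsum e (S.erase a) (r - 1 + e a))
        + (if r = 1 then (S.filter fun a => e a = 0).card * (S.card - 1).factorial else 0) := by
  classical
  have hmain :
      (∑ a ∈ S, (r - 1 + e a) * Wsum e (S.erase a) (r - 1 + e a))
        = ∑ A ∈ S.powerset,
            (if A.card = r + ∑ x ∈ A, e x then
              (∑ a ∈ A, (r - 1 + e a)) * ((A.card - 2).factorial * (S.card - A.card).factorial)
            else 0) := by
    calc ∑ a ∈ S, (r - 1 + e a) * Wsum e (S.erase a) (r - 1 + e a)
        = ∑ a ∈ S, ∑ A ∈ (S.erase a).powerset,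
            (r - 1 + e a) * (if (insert a A).card = r + ∑ x ∈ insert a A, e x then
              ((insert a A).card - 2).factorial * (S.card - (insert a A).card).factorial
            else 0) := by
          refine Finset.sum_congr rfl fun a ha => ?_
          rw [Wsum, Finset.mul_sum]
          refine Finset.sum_congr rfl fun A hA => ?_
          rw [Finset.mem_powerset] at hA
          have haA : a ∉ A := fun h => (Finset.mem_erase.1 (hA h)).1 rfl
          rw [Finset.sum_insert haA, Finset.card_insert_of_notMem haA,
            Finset.card_erase_of_mem ha]
          congr 1
          refine if_congr ?_ ?_ rfl
          · constructor <;> intro h <;> omega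
          · rw [show A.card + 1 - 2 = A.card - 1 by omega,
              show S.card - (A.card + 1) = S.card - 1 - A.card by omega]
      _ = ∑ A ∈ S.powerset, ∑ a ∈ A,
            (r - 1 + e a) * (if A.card = r + ∑ x ∈ A, e x then
              (A.card - 2).factorial * (S.card - A.card).factorial else 0) :=
          (sum_powerset_mem_swap S (fun a A =>
            (r - 1 + e a) * (if A.card = r + ∑ x ∈ A, e x then
              (A.card - 2).factorial * (S.card - A.card).factorial else 0))).symm
      _ = _ := by
          refine Finset.sum_congr rfl fun A _ => ?_
          by_cases hc : A.card = r + ∑ x ∈ A, e x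
          · simp only [if_pos hc, Finset.sum_mul]
          · simp [if_neg hc]
  have hcorr :
      (∑ A ∈ S.powerset, (if A.card = r + ∑ x ∈ A, e x ∧ A.card = 1 then
          (S.card - 1).factorial else 0))
        = if r = 1 then (S.filter fun a => e a = 0).card * (S.card - 1).factorial else 0 := by
    rcases eq_or_ne r 1 with hr1 | hr1
    · subst hr1
      rw [if_pos rfl, ← Finset.sum_filter, Finset.sum_const, smul_eq_mul]
      congr 1
      refine (Finset.card_bij (fun a _ => {a}) ?_ ?_ ?_).symm
      · intro a ha
        rw [Finset.mem_filter] at ha ⊢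
        refine ⟨Finset.mem_powerset.2 (Finset.singleton_subset_iff.2 ha.1),
          ?_, Finset.card_singleton a⟩
        simp [ha.2]
      · intro a _ b _ h
        exact Finset.singleton_injective h
      · intro A hA
        rw [Finset.mem_filter] at hA
        obtain ⟨a, rfl⟩ := Finset.card_eq_one.1 hA.2.2
        have ha : a ∈ S := Finset.mem_powerset.1 hA.1 (Finset.mem_singleton_self a)
        have he : e a = 0 := by
          have h2 := hA.2.1
          simp only [Finset.card_singleton, Finset.sum_singleton] at h2
          omega
        exact ⟨a, Finset.mem_filter.2 ⟨ha, he⟩, rfl⟩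
    · rw [if_neg hr1]
      refine Finset.sum_eq_zero fun A _ => ?_
      rw [if_neg]
      rintro ⟨h1, h2⟩
      omega
  rw [hmain, ← hcorr, ← Finset.sum_add_distrib, Wsum, Finset.mul_sum]
  refine Finset.sum_congr rfl fun A hA => ?_
  by_cases hc : A.card = r + ∑ x ∈ A, e x
  · rcases eq_or_ne A.card 1 with h1 | h1
    · have hr1 : r = 1 := by omega
      have hs0 : (∑ a ∈ A, (r - 1 + e a)) = 0 := by
        refine Finset.sum_eq_zero fun a ha => ?_
        have h3 : e a ≤ ∑ x ∈ A, e x := Finset.single_le_sum (fun x _ => Nat.zero_le _) ha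
        omega
      rw [if_pos hc, if_pos (show A.card = r + ∑ x ∈ A, e x ∧ A.card = 1 from ⟨hc, h1⟩),
        hs0, zero_mul, ite_self, zero_add, h1, hr1]
      norm_num
    · have h1' : ¬(A.card = r + ∑ x ∈ A, e x ∧ A.card = 1) := fun h => h1 h.2
      have hk2 : 2 ≤ A.card := by omega
      have hf : (A.card - 1).factorial = (A.card - 1) * (A.card - 2).factorial := by
        rw [show A.card - 1 = (A.card - 2) + 1 by omega, Nat.factorial_succ]
      have hsum : (∑ a ∈ A, (r - 1 + e a)) = r * (A.card - 1) := by
        rw [Finset.sum_add_distrib, Finset.sum_const, smul_eq_mul, hc]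
        obtain ⟨r', rfl⟩ := Nat.exists_eq_add_of_le hr
        generalize (∑ x ∈ A, e x) = s
        rw [show 1 + r' - 1 = r' by omega, show 1 + r' + s - 1 = r' + s by omega]
        ring
      rw [if_pos hc, if_pos hc, if_neg h1', add_zero, hsum, hf]
      ring
  · have h1' : ¬(A.card = r + ∑ x ∈ A, e x ∧ A.card = 1) := fun h => hc h.1
    rw [if_neg hc, if_neg hc, if_neg h1', mul_zero, add_zero]

/-- Count (defined recursively) of orderings with all prefix sums below `r`. -/
def Bfun (e : α → ℕ) : ℕ → Finset α → ℕ → ℕ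
  | 0, _, _ => 1
  | (k+1), S, r => ∑ a ∈ S, if 2 ≤ r + e a then Bfun e k (S.erase a) (r - 1 + e a) else 0

lemma Cprime (e : α → ℕ) : ∀ (k : ℕ) (S : Finset α), S.card = k → ∀ r, 1 ≤ r →
    r * Wsum e S r + Bfun e k S r = k.factorial := by
  intro k
  induction k with
  | zero =>
    intro S hS r hr
    have hSe : S = ∅ := Finset.card_eq_zero.1 hS
    subst hSe
    have : Wsum e ∅ r = 0 := by
      rw [Wsum]
      simp only [Finset.powerset_empty, Finset.sum_singleton, Finset.card_empty,
        Finset.sum_empty]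
      exact if_neg (by omega)
    rw [this, Bfun]
    simp
  | succ k ih =>
    intro S hS r hr
    rw [Wrec e S r hr, Bfun, hS, Nat.add_sub_cancel]
    have hstep : ∀ a ∈ S,
        (r - 1 + e a) * Wsum e (S.erase a) (r - 1 + e a)
          + (if 2 ≤ r + e a then Bfun e k (S.erase a) (r - 1 + e a) else 0)
        = if 2 ≤ r + e a then k.factorial else 0 := by
      intro a ha
      have hcard : (S.erase a).card = k := by
        rw [Finset.card_erase_of_mem ha, hS, Nat.add_sub_cancel]
      by_cases h2 : 2 ≤ r + e a
      · rw [if_pos h2, if_pos h2]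
        exact ih (S.erase a) hcard (r - 1 + e a) (by omega)
      · have h0 : r - 1 + e a = 0 := by omega
        rw [if_neg h2, if_neg h2, h0, zero_mul, add_zero]
    have hsplit :
        (∑ a ∈ S, (r - 1 + e a) * Wsum e (S.erase a) (r - 1 + e a))
          + (∑ a ∈ S, if 2 ≤ r + e a then Bfun e k (S.erase a) (r - 1 + e a) else 0)
        = ∑ a ∈ S, (if 2 ≤ r + e a then k.factorial else 0) := by
      rw [← Finset.sum_add_distrib]
      exact Finset.sum_congr rfl hstep
    have hcount :
        (∑ a ∈ S, (if 2 ≤ r + e a then k.factorial else 0))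
          + (if r = 1 then (S.filter fun a => e a = 0).card * k.factorial else 0)
        = (k + 1) * k.factorial := by
      rw [← Finset.sum_filter, Finset.sum_const, smul_eq_mul]
      rcases eq_or_ne r 1 with hr1 | hr1
      · subst hr1
        rw [if_pos rfl, ← add_mul]
        congr 1
        have hA := Finset.card_filter_add_card_filter_not
          (s := S) (p := fun a => 2 ≤ 1 + e a)
        have hB : S.filter (fun a => ¬ 2 ≤ 1 + e a) = S.filter (fun a => e a = 0) := by
          apply Finset.filter_congr
          intro x _
          constructor <;> intro h <;> omega
        rw [hB] at hA
        omega
      · rw [if_neg hr1]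
        have : S.filter (fun a => 2 ≤ r + e a) = S := by
          apply Finset.filter_true_of_mem
          intro x _
          omega
        rw [this, add_zero, hS]
    rw [add_right_comm, add_assoc, ← add_assoc, hsplit, hcount, Nat.factorial_succ]

lemma Bzero (e : α → ℕ) : ∀ (k : ℕ) (S : Finset α), S.card = k → ∀ r, 1 ≤ r →
    r + ∑ x ∈ S, e x ≤ S.card → Bfun e k S r = 0 := by
  intro k
  induction k with
  | zero =>
    intro S hS r hr hle
    rw [Finset.card_eq_zero.1 hS] at hle
    simp at hle
    omega
  | succ k ih =>
    intro S hS r hr hle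
    rw [Bfun]
    refine Finset.sum_eq_zero fun a ha => ?_
    by_cases h2 : 2 ≤ r + e a
    · rw [if_pos h2]
      refine ih (S.erase a) (by rw [Finset.card_erase_of_mem ha, hS, Nat.add_sub_cancel]) _ (by omega) ?_
      have hsum : e a + ∑ x ∈ S.erase a, e x = ∑ x ∈ S, e x :=
        Finset.add_sum_erase S e ha
      rw [Finset.card_erase_of_mem ha]
      omega
    · rw [if_neg h2]

lemma claimA (e : α → ℕ) (S : Finset α) (r : ℕ) (hr : 1 ≤ r)
    (hle : r + ∑ x ∈ S, e x ≤ S.card) :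
    r * Wsum e S r = S.card.factorial := by
  have h1 := Cprime e S.card S rfl r hr
  have h2 := Bzero e S.card S rfl r hr hle
  omega





/-- The genus-0 correlator `⟨τ_{a₁}⋯τ_{a_m}⟩₀` of the one-dimensional TFT,
on the multiset of indices: `(m−3)!/(a₁!⋯a_m!)` if `m ≥ 3` and
`a₁+⋯+a_m = m−3`, and `0` otherwise. -/
noncomputable def corr (s : Multiset ℕ) : ℂ :=
  if 3 ≤ Multiset.card s ∧ s.sum = Multiset.card s - 3 then
    ((Multiset.card s - 3).factorial : ℂ) / (((s.map Nat.factorial).prod : ℕ) : ℂ)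
  else 0

variable {n : ℕ}

lemma corr_cons (d : Fin n → ℕ) (I : Finset (Fin n)) :
    corr ((0 : ℕ) ::ₘ Multiset.map d I.val)
      = if I.card = (∑ a ∈ I, d a) + 2 then
          ((I.card - 2).factorial : ℂ) / ((∏ a ∈ I, (d a).factorial : ℕ) : ℂ)
        else 0 := by
  have hcard : Multiset.card ((0 : ℕ) ::ₘ Multiset.map d I.val) = I.card + 1 := by
    rw [Multiset.card_cons, Multiset.card_map]
    rfl
  have hsum : ((0 : ℕ) ::ₘ Multiset.map d I.val).sum = ∑ a ∈ I, d a := by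
    rw [Multiset.sum_cons, zero_add, Finset.sum]
  have hprod : (((0 : ℕ) ::ₘ Multiset.map d I.val).map Nat.factorial).prod
      = ∏ a ∈ I, (d a).factorial := by
    rw [Multiset.map_cons, Multiset.prod_cons, Multiset.map_map, Nat.factorial_zero, one_mul,
      Finset.prod]
    rfl
  rw [corr, hcard, hsum, hprod]
  refine if_congr ?_ ?_ rfl
  · constructor <;> intro h <;> omega
  · rw [show I.card + 1 - 3 = I.card - 2 by omega]

lemma corr_update (hn : 3 ≤ n) (d : Fin n → ℕ) (i : Fin n) :
    corr (Multiset.map (Function.update d i (d i + 1)) Finset.univ.val)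
      = if (∑ a, d a) + 4 = n then
          ((n - 3).factorial : ℂ) / (((d i + 1) * ∏ a, (d a).factorial : ℕ) : ℂ)
        else 0 := by
  have hcard : Multiset.card (Multiset.map (Function.update d i (d i + 1)) Finset.univ.val)
      = n := by
    rw [Multiset.card_map]
    exact Finset.card_univ.trans (Fintype.card_fin n)
  have hsum : (Multiset.map (Function.update d i (d i + 1)) Finset.univ.val).sum
      = (∑ a, d a) + 1 := by
    rw [show (Multiset.map (Function.update d i (d i + 1)) Finset.univ.val).sum
        = ∑ a, Function.update d i (d i + 1) a from rfl]
    rw [Finset.sum_update_of_mem (Finset.mem_univ i), ← Finset.erase_eq,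
      ← Finset.add_sum_erase _ d (Finset.mem_univ i)]
    ring
  have hprod : ((Multiset.map (Function.update d i (d i + 1)) Finset.univ.val).map
      Nat.factorial).prod = (d i + 1) * ∏ a, (d a).factorial := by
    rw [Multiset.map_map,
      show ((Finset.univ.val.map (Nat.factorial ∘ Function.update d i (d i + 1)))).prod
        = ∏ a, (Function.update d i (d i + 1) a).factorial from rfl,
      ← Finset.mul_prod_erase _ _ (Finset.mem_univ i), Function.update_self,
      Nat.factorial_succ, ← Finset.mul_prod_erase _ (fun a => (d a).factorial)
        (Finset.mem_univ i), mul_assoc]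
    congr 1
    congr 1
    exact Finset.prod_congr rfl fun a ha => by
      rw [Function.update_of_ne (Finset.ne_of_mem_erase ha)]
  rw [corr, hcard, hsum, hprod]
  refine if_congr ?_ rfl rfl
  constructor <;> intro h <;> [skip; exact ⟨hn, by omega⟩]
  omega

/-- The symmetrised genus-0 topological recursion relation for the explicit
genus-0 correlators: for distinct `i, j`,
`c(d₁,…,d_i+1,…,d_n) + c(d₁,…,d_j+1,…,d_n) = Σ_{I⊔J={1,…,n}, i∈I, j∈J} c(d_I,0)·c(0,d_J)`. -/
theorem trr_genus_zero_symmetrised (n : ℕ) (hn : 3 ≤ n) (d : Fin n → ℕ)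
    (i j : Fin n) (hij : i ≠ j) :
    corr (Multiset.map (Function.update d i (d i + 1)) Finset.univ.val)
        + corr (Multiset.map (Function.update d j (d j + 1)) Finset.univ.val) =
      ∑ I ∈ Finset.univ.powerset.filter
          (fun I : Finset (Fin n) => i ∈ I ∧ j ∉ I),
        corr ((0 : ℕ) ::ₘ Multiset.map d I.val) *
          corr ((0 : ℕ) ::ₘ Multiset.map d Iᶜ.val) := by
  classical
  rw [corr_update hn d i, corr_update hn d j]
  by_cases hmain : (∑ a, d a) + 4 = n
  · rw [if_pos hmain, if_pos hmain]
    have hn4 : 4 ≤ n := by omega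
    set S : Finset (Fin n) := Finset.univ \ {i, j} with hSdef
    have hiS : i ∉ S := by simp [hSdef]
    have hjS : j ∉ S := by simp [hSdef]
    have hmemS : ∀ x, x ∈ S ↔ x ≠ i ∧ x ≠ j := by
      intro x
      simp only [hSdef, Finset.mem_sdiff, Finset.mem_univ, true_and, Finset.mem_insert,
        Finset.mem_singleton, not_or]
    have hij2 : ({i, j} : Finset (Fin n)).card = 2 := by
      rw [Finset.card_insert_of_notMem (by simpa using hij), Finset.card_singleton]
    have hcardS : S.card + 2 = n := by
      rw [hSdef, Finset.card_sdiff_of_subset (Finset.subset_univ _), hij2, Finset.card_univ,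
        Fintype.card_fin]
      omega
    have hsumS : (∑ x ∈ S, d x) + d i + d j = ∑ a, d a := by
      have h := Finset.sum_sdiff (f := d) (Finset.subset_univ ({i, j} : Finset (Fin n)))
      rw [Finset.sum_pair hij, ← hSdef] at h
      omega
    set Pd : ℕ := ∏ a, (d a).factorial with hPdDef
    have hPdpos : 0 < Pd := Finset.prod_pos fun a _ => Nat.factorial_pos _
    have hPdC : (Pd : ℂ) ≠ 0 := Nat.cast_ne_zero.mpr hPdpos.ne'
    have hprodS : (∏ x ∈ S, (d x).factorial) * ((d i).factorial * (d j).factorial) = Pd := by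
      have h := Finset.prod_sdiff (f := fun a => (d a).factorial)
        (Finset.subset_univ ({i, j} : Finset (Fin n)))
      rw [Finset.prod_pair hij] at h
      exact h
    have hbij :
        (∑ I ∈ Finset.univ.powerset.filter (fun I : Finset (Fin n) => i ∈ I ∧ j ∉ I),
          corr ((0 : ℕ) ::ₘ Multiset.map d I.val) * corr ((0 : ℕ) ::ₘ Multiset.map d Iᶜ.val))
        = ∑ A ∈ S.powerset,
            corr ((0 : ℕ) ::ₘ Multiset.map d (insert i A).val) *
              corr ((0 : ℕ) ::ₘ Multiset.map d ((insert i A)ᶜ).val) := by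
      refine Finset.sum_nbij' (fun I => I.erase i) (fun A => insert i A) ?_ ?_ ?_ ?_ ?_
      · intro I hI
        rw [Finset.mem_filter] at hI
        rw [Finset.mem_powerset]
        intro x hx
        rw [Finset.mem_erase] at hx
        rw [hmemS]
        exact ⟨hx.1, fun hxj => hI.2.2 (hxj ▸ hx.2)⟩
      · intro A hA
        rw [Finset.mem_powerset] at hA
        rw [Finset.mem_filter]
        refine ⟨Finset.mem_powerset.2 (Finset.subset_univ _), Finset.mem_insert_self _ _, ?_⟩
        rw [Finset.mem_insert]
        rintro (h | h)
        · exact hij h.symm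
        · exact hjS (hA h)
      · intro I hI
        rw [Finset.mem_filter] at hI
        exact Finset.insert_erase hI.2.1
      · intro A hA
        rw [Finset.mem_powerset] at hA
        exact Finset.erase_insert (fun h => hiS (hA h))
      · intro I hI
        rw [Finset.mem_filter] at hI
        rw [Finset.insert_erase hI.2.1]
    rw [hbij]
    have heval : ∀ A ∈ S.powerset,
        corr ((0 : ℕ) ::ₘ Multiset.map d (insert i A).val) *
          corr ((0 : ℕ) ::ₘ Multiset.map d ((insert i A)ᶜ).val)
        = ((if A.card = (d i + 1) + ∑ x ∈ A, d x then
              (A.card - 1).factorial * (S.card - 1 - A.card).factorial else 0 : ℕ) : ℂ)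
            / (Pd : ℂ) := by
      intro A hA
      rw [Finset.mem_powerset] at hA
      have hiA : i ∉ A := fun h => hiS (hA h)
      have hjA : j ∉ A := fun h => hjS (hA h)
      have hjSA : j ∉ S \ A := fun h => hjS (Finset.mem_sdiff.1 h).1
      have hIc : (insert i A)ᶜ = insert j (S \ A) := by
        ext x
        rw [Finset.mem_compl, Finset.mem_insert, Finset.mem_insert, Finset.mem_sdiff, hmemS]
        constructor
        · intro h
          push_neg at h
          by_cases hxj : x = j
          · exact Or.inl hxj
          · exact Or.inr ⟨⟨h.1, hxj⟩, h.2⟩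
        · rintro (rfl | ⟨⟨h1, h2⟩, h3⟩)
          · push_neg
            exact ⟨fun h => hij h.symm, hjA⟩
          · push_neg
            exact ⟨h1, h3⟩
      rw [corr_cons d (insert i A), hIc, corr_cons d (insert j (S \ A))]
      have hci : (insert i A).card = A.card + 1 := Finset.card_insert_of_notMem hiA
      have hsi : ∑ a ∈ insert i A, d a = d i + ∑ a ∈ A, d a := Finset.sum_insert hiA
      have hcj : (insert j (S \ A)).card = (S \ A).card + 1 :=
        Finset.card_insert_of_notMem hjSA
      have hsj : ∑ a ∈ insert j (S \ A), d a = d j + ∑ a ∈ S \ A, d a :=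
        Finset.sum_insert hjSA
      have hcsd : (S \ A).card + A.card = S.card := Finset.card_sdiff_add_card_eq_card hA
      have hssd : (∑ a ∈ S \ A, d a) + ∑ a ∈ A, d a = ∑ a ∈ S, d a := Finset.sum_sdiff hA
      have hAle : A.card ≤ S.card := Finset.card_le_card hA
      have hDle : (∑ a ∈ A, d a) ≤ ∑ a ∈ S, d a := Finset.sum_le_sum_of_subset hA
      by_cases hcond : A.card = (d i + 1) + ∑ x ∈ A, d x
      · rw [if_pos (by rw [hci, hsi]; omega), if_pos (by rw [hcj, hsj]; omega),
          if_pos hcond, div_mul_div_comm]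
        congr 1
        · rw [hci, hcj, show A.card + 1 - 2 = A.card - 1 by omega,
            show (S \ A).card + 1 - 2 = S.card - 1 - A.card by omega]
          push_cast
          ring
        · rw [← Nat.cast_mul]
          congr 1
          rw [Finset.prod_insert hiA, Finset.prod_insert hjSA, ← hprodS,
            ← Finset.prod_sdiff (f := fun a => (d a).factorial) hA]
          ring
      · rw [if_neg (by rw [hci, hsi]; omega), zero_mul, if_neg hcond, Nat.cast_zero, zero_div]
    rw [Finset.sum_congr rfl heval, ← Finset.sum_div, ← Nat.cast_sum]
    set Y : ℕ := ∑ A ∈ S.powerset,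
        (if A.card = (d i + 1) + ∑ x ∈ A, d x then
          (A.card - 1).factorial * (S.card - 1 - A.card).factorial else 0) with hYdef
    have hflip :
        (∑ A ∈ S.powerset, (if A.card = (d i + 1) + ∑ x ∈ A, d x then
            A.card.factorial * (S.card - 1 - A.card).factorial else 0))
        = ∑ A ∈ S.powerset, (if A.card = (d j + 1) + ∑ x ∈ A, d x then
            (A.card - 1).factorial * (S.card - A.card).factorial else 0) := by
      refine Finset.sum_nbij' (fun A => S \ A) (fun A => S \ A) ?_ ?_ ?_ ?_ ?_
      · intro A _
        exact Finset.mem_powerset.2 Finset.sdiff_subset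
      · intro A _
        exact Finset.mem_powerset.2 Finset.sdiff_subset
      · intro A hA
        show S \ (S \ A) = A
        rw [Finset.sdiff_sdiff_self_left, Finset.inter_eq_right]
        exact Finset.mem_powerset.1 hA
      · intro A hA
        show S \ (S \ A) = A
        rw [Finset.sdiff_sdiff_self_left, Finset.inter_eq_right]
        exact Finset.mem_powerset.1 hA
      · intro A hA
        rw [Finset.mem_powerset] at hA
        have hcsd : (S \ A).card + A.card = S.card := Finset.card_sdiff_add_card_eq_card hA
        have hssd : (∑ a ∈ S \ A, d a) + ∑ a ∈ A, d a = ∑ a ∈ S, d a := Finset.sum_sdiff hA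
        have hAle : A.card ≤ S.card := Finset.card_le_card hA
        have hDle : (∑ a ∈ A, d a) ≤ ∑ a ∈ S, d a := Finset.sum_le_sum_of_subset hA
        by_cases hcond : A.card = (d i + 1) + ∑ x ∈ A, d x
        · rw [if_pos hcond, if_pos (by omega),
            show (S \ A).card - 1 = S.card - 1 - A.card by omega,
            show S.card - (S \ A).card = A.card by omega]
          ring
        · rw [if_neg hcond, if_neg (by omega)]
    have hY1 : S.card * Y = Wsum d S (d i + 1) + Wsum d S (d j + 1) := by
      have hsplit : S.card * Y
          = (∑ A ∈ S.powerset, (if A.card = (d i + 1) + ∑ x ∈ A, d x then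
              A.card.factorial * (S.card - 1 - A.card).factorial else 0))
            + ∑ A ∈ S.powerset, (if A.card = (d i + 1) + ∑ x ∈ A, d x then
              (A.card - 1).factorial * (S.card - A.card).factorial else 0) := by
        rw [hYdef, Finset.mul_sum, ← Finset.sum_add_distrib]
        refine Finset.sum_congr rfl fun A hA => ?_
        rw [Finset.mem_powerset] at hA
        have hcsd : (S \ A).card + A.card = S.card := Finset.card_sdiff_add_card_eq_card hA
        have hssd : (∑ a ∈ S \ A, d a) + ∑ a ∈ A, d a = ∑ a ∈ S, d a := Finset.sum_sdiff hA
        have hDle : (∑ a ∈ A, d a) ≤ ∑ a ∈ S, d a := Finset.sum_le_sum_of_subset hA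
        by_cases hcond : A.card = (d i + 1) + ∑ x ∈ A, d x
        · rw [if_pos hcond, if_pos hcond, if_pos hcond]
          have hk1 : 1 ≤ A.card := by omega
          have hkm : A.card + 1 ≤ S.card := by omega
          rw [show A.card - 1 = A.card - 1 from rfl]
          obtain ⟨k1, hk1'⟩ : ∃ k1, A.card = k1 + 1 := ⟨A.card - 1, by omega⟩
          obtain ⟨m1, hm1'⟩ : ∃ m1, S.card - A.card = m1 + 1 := ⟨S.card - A.card - 1, by omega⟩
          rw [show A.card - 1 = k1 by omega, show S.card - 1 - A.card = m1 by omega,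
            show S.card - A.card = m1 + 1 by omega, show A.card = k1 + 1 by omega,
            show S.card = k1 + m1 + 2 by omega, Nat.factorial_succ, Nat.factorial_succ]
          ring
        · rw [if_neg hcond, if_neg hcond, if_neg hcond]
          simp
      rw [hsplit, Wsum, Wsum, hflip]
      ring
    have hWp : (d i + 1) * Wsum d S (d i + 1) = S.card.factorial :=
      claimA d S (d i + 1) (by omega) (by omega)
    have hWq : (d j + 1) * Wsum d S (d j + 1) = S.card.factorial :=
      claimA d S (d j + 1) (by omega) (by omega)
    have hfact : S.card * (S.card - 1).factorial = S.card.factorial :=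
      Nat.mul_factorial_pred (by omega)
    have hkey : (d i + 1) * ((d j + 1) * Y)
        = ((d i + 1) + (d j + 1)) * (S.card - 1).factorial := by
      apply Nat.eq_of_mul_eq_mul_left (show 0 < S.card by omega)
      calc S.card * ((d i + 1) * ((d j + 1) * Y))
          = (d i + 1) * ((d j + 1) * (S.card * Y)) := by ring
        _ = (d i + 1) * ((d j + 1) * (Wsum d S (d i + 1) + Wsum d S (d j + 1))) := by
            rw [hY1]
        _ = (d j + 1) * ((d i + 1) * Wsum d S (d i + 1))
            + (d i + 1) * ((d j + 1) * Wsum d S (d j + 1)) := by ring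
        _ = (d j + 1) * S.card.factorial + (d i + 1) * S.card.factorial := by rw [hWp, hWq]
        _ = ((d i + 1) + (d j + 1)) * (S.card * (S.card - 1).factorial) := by rw [hfact]; ring
        _ = S.card * (((d i + 1) + (d j + 1)) * (S.card - 1).factorial) := by ring
    have hn3 : n - 3 = S.card - 1 := by omega
    rw [hn3]
    have h1 : ((d i : ℂ) + 1) ≠ 0 := by
      have := Nat.cast_ne_zero (R := ℂ) (n := d i + 1)
      push_cast at this
      exact this.mpr (by omega)
    have h2 : ((d j : ℂ) + 1) ≠ 0 := by
      have := Nat.cast_ne_zero (R := ℂ) (n := d j + 1)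
      push_cast at this
      exact this.mpr (by omega)
    have hkeyC : ((d i : ℂ) + 1) * (((d j : ℂ) + 1) * (Y : ℂ))
        = (((d i : ℂ) + 1) + ((d j : ℂ) + 1)) * (((S.card - 1).factorial : ℕ) : ℂ) := by
      have := congrArg (Nat.cast : ℕ → ℂ) hkey
      push_cast at this
      exact this
    push_cast
    rw [div_add_div _ _ (mul_ne_zero h1 hPdC) (mul_ne_zero h2 hPdC), div_eq_div_iff
      (mul_ne_zero (mul_ne_zero h1 hPdC) (mul_ne_zero h2 hPdC)) hPdC]
    linear_combination (-((Pd : ℂ) * (Pd : ℂ))) * hkeyC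

  · rw [if_neg hmain, if_neg hmain, add_zero]
    symm
    refine Finset.sum_eq_zero fun I hI => ?_
    rw [corr_cons d I, corr_cons d Iᶜ]
    have h1 : I.card + Iᶜ.card = n := by
      rw [Finset.card_add_card_compl, Fintype.card_fin]
    have h2 : (∑ a ∈ I, d a) + (∑ a ∈ Iᶜ, d a) = ∑ a, d a :=
      Finset.sum_add_sum_compl I d
    by_cases hc1 : I.card = (∑ a ∈ I, d a) + 2
    · by_cases hc2 : Iᶜ.card = (∑ a ∈ Iᶜ, d a) + 2
      · omega
      · rw [if_neg hc2, mul_zero]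
    · rw [if_neg hc1, zero_mul]
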